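/- arXiv:1912.11661 — 3 statements merged into one kernel-verified Lean document; each statement's English description precedes it below -/
import Mathlib

section
/- Let α, t > 0 and q(0) > 0. Then sup { √(2αt)·u + q(0)·v : u² + v ≤ 1, 0 ≤ u ≤ 1, 0 ≤ v ≤ 1 } equals q(0) + αt/(2q(0)) if t < 2q(0)²/α, and equals √(2αt) if t ≥ 2q(0)²/α. -/
/-!
With `s = √(2αt)` the objective is `s u + q v` and the constraint is active at a maximiser,
so one maximises `s u + q (1 - u²)` over `u ∈ [0, 1]`. This concave parabola peaks at
`u = s / (2q)`, with value `q + s² / (4q)`, when that point lies in `[0, 1]`; otherwise it is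
increasing on `[0, 1]` and the maximum `s` is attained at `u = 1`. Since `s² = 2αt`, the
condition `s < 2q` is `t < 2q²/α`.
-/

namespace ParabolicRegion

def values (s q : ℝ) : Set ℝ :=
  {x | ∃ u v : ℝ, 0 ≤ u ∧ u ≤ 1 ∧ 0 ≤ v ∧ v ≤ 1 ∧ u ^ 2 + v ≤ 1 ∧ x = s * u + q * v}

variable {s q : ℝ}

theorem le_add_sq_div (hq : 0 < q) {x : ℝ} (hx : x ∈ values s q) :
    x ≤ q + s ^ 2 / (4 * q) := by
  obtain ⟨u, v, -, -, -, -, huv, rfl⟩ := hx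
  have hqv : q * v ≤ q * (1 - u ^ 2) := mul_le_mul_of_nonneg_left (by linarith) hq.le
  have hamgm : s * u - q * u ^ 2 ≤ s ^ 2 / (4 * q) := by
    rw [le_div_iff₀ (by positivity)]
    nlinarith [sq_nonneg (2 * q * u - s)]
  linarith

theorem le_self_of_two_mul_le (hq : 0 ≤ q) (hqs : 2 * q ≤ s) {x : ℝ} (hx : x ∈ values s q) :
    x ≤ s := by
  obtain ⟨u, v, hu0, hu1, -, -, huv, rfl⟩ := hx
  have hqv : q * v ≤ q * ((1 - u) * (1 + u)) := mul_le_mul_of_nonneg_left (by linarith) hq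
  have hslope : q * (1 + u) ≤ s := by nlinarith
  nlinarith [mul_le_mul_of_nonneg_left hslope (sub_nonneg.2 hu1)]

theorem add_sq_div_mem (hs : 0 ≤ s) (hq : 0 < q) (hsq : s ≤ 2 * q) :
    q + s ^ 2 / (4 * q) ∈ values s q := by
  set u := s / (2 * q) with hu
  have hu0 : 0 ≤ u := by positivity
  have hu1 : u ≤ 1 := (div_le_one (by positivity)).2 hsq
  refine ⟨u, 1 - u ^ 2, hu0, hu1, by nlinarith, by nlinarith, (add_sub_cancel _ _).le, ?_⟩
  rw [hu]
  field_simp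
  ring

theorem self_mem : s ∈ values s q :=
  ⟨1, 0, zero_le_one, le_rfl, le_rfl, zero_le_one, by norm_num, by ring⟩

theorem isGreatest_values (hs : 0 ≤ s) (hq : 0 < q) :
    IsGreatest (values s q) (if s < 2 * q then q + s ^ 2 / (4 * q) else s) := by
  split_ifs with hsq
  · exact ⟨add_sq_div_mem hs hq hsq.le, fun _ hx ↦ le_add_sq_div hq hx⟩
  · exact ⟨self_mem, fun _ hx ↦ le_self_of_two_mul_le hq.le (not_lt.1 hsq) hx⟩

end ParabolicRegion

theorem sup_linear_constraint (α t q0 : ℝ) (hα : 0 < α) (ht : 0 < t) (hq0 : 0 < q0) :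
    sSup {x : ℝ | ∃ u v : ℝ, 0 ≤ u ∧ u ≤ 1 ∧ 0 ≤ v ∧ v ≤ 1 ∧ u ^ 2 + v ≤ 1 ∧
        x = Real.sqrt (2 * α * t) * u + q0 * v} =
      if t < 2 * q0 ^ 2 / α then q0 + α * t / (2 * q0) else Real.sqrt (2 * α * t) := by
  set s := Real.sqrt (2 * α * t)
  have hs : 0 ≤ s := Real.sqrt_nonneg _
  have hs2 : s ^ 2 = 2 * α * t := Real.sq_sqrt (by positivity)
  have hcond : t < 2 * q0 ^ 2 / α ↔ s < 2 * q0 := by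
    rw [lt_div_iff₀ hα, ← pow_lt_pow_iff_left₀ hs (by positivity) two_ne_zero, hs2]
    constructor <;> intro h <;> nlinarith
  have hvalue : q0 + α * t / (2 * q0) = q0 + s ^ 2 / (4 * q0) := by
    rw [hs2]
    field_simp
    ring
  rw [if_congr hcond hvalue rfl]
  exact (ParabolicRegion.isGreatest_values hs hq0).csSup_eq
end

section
/- Let f(x,θ) = (αx + βx²)·exp(θ(−1 + αx + βx² − mx²)) + (1 − αx − βx²)·exp(θ(αx + βx² − mx²)) with α, β > 0 and 0 < m < β. Then θ = 0 solves f(0,θ) = 1, and if θ(x) is a differentiable function with θ(0) = 0 and f(x,θ(x)) = 1 for all x near 0, and θ is not identically zero to first order, then θ'(0) = 2m/α. -/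
/-!
Put `A = αx + βx²` and `B = A - mx²`. Multiplying `f x θ = 1` by `exp (-θB)` turns it into
`A (1 - e^{-θ}) = 1 - e^{-θB}`. Writing `1 - e^{-y} = y - y² ψ y`, where `ψ = expNegRemainder`
tends to `1/2` at `0`, and cancelling `θ ≠ 0` gives `m x² = θ (A ψ θ - B² ψ (θB))`. Dividing
by `x²` and letting `x → 0` yields `m = θ'(0) α / 2`.
-/

open Real Filter Topology

noncomputable def expNegRemainder (y : ℝ) : ℝ :=
  if y = 0 then 1 / 2 else (exp (-y) - 1 + y) / y ^ 2

lemma one_sub_exp_neg_eq (y : ℝ) : 1 - exp (-y) = y - y ^ 2 * expNegRemainder y := by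
  unfold expNegRemainder
  split_ifs with h
  · simp [h]
  · field_simp
    ring

lemma expNegRemainder_zero : expNegRemainder 0 = 1 / 2 := if_pos rfl

lemma abs_expNegRemainder_sub_half_le {y : ℝ} (h : |y| ≤ 1) :
    |expNegRemainder y - 1 / 2| ≤ |y| := by
  unfold expNegRemainder
  split_ifs with hy
  · simp [hy]
  have hy2 : 0 < y ^ 2 := by positivity
  have htaylor : |exp (-y) - (1 - y + y ^ 2 / 2)| ≤ |y| ^ 3 * (2 / 9) := by
    have := Real.exp_bound (x := -y) (by rwa [abs_neg]) (n := 3) (by norm_num)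
    norm_num [Finset.sum_range_succ, Nat.factorial, abs_neg] at this
    convert this using 2
    ring
  have hre : (exp (-y) - 1 + y) / y ^ 2 - 1 / 2 = (exp (-y) - (1 - y + y ^ 2 / 2)) / y ^ 2 := by
    field_simp
    ring
  rw [hre, abs_div, abs_of_pos hy2, div_le_iff₀ hy2]
  calc _ ≤ |y| ^ 3 * (2 / 9) := htaylor
    _ ≤ |y| ^ 3 := by nlinarith [pow_nonneg (abs_nonneg y) 3]
    _ = |y| * y ^ 2 := by rw [← sq_abs y]; ring

lemma continuousAt_expNegRemainder : ContinuousAt expNegRemainder 0 := by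
  rw [ContinuousAt, expNegRemainder_zero, tendsto_iff_norm_sub_tendsto_zero]
  refine squeeze_zero_norm' ?_ (continuous_abs.tendsto' 0 0 abs_zero)
  filter_upwards [Metric.ball_mem_nhds (0 : ℝ) one_pos] with y hy
  rw [norm_norm]
  exact abs_expNegRemainder_sub_half_le (by simpa using (mem_ball_zero_iff.mp hy).le)

/-- `A * exp (t * (B - 1)) + (1 - A) * exp (t * B)` is the moment generating function of the
increment that equals `B - 1` with probability `A` and `B` otherwise. -/
lemma sub_eq_mul_of_mgf_eq_one {A B t : ℝ} (ht : t ≠ 0)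
    (h : A * exp (t * (B - 1)) + (1 - A) * exp (t * B) = 1) :
    A - B = t * (A * expNegRemainder t - B ^ 2 * expNegRemainder (t * B)) := by
  have hscaled : A * (1 - exp (-t)) = 1 - exp (-(t * B)) := by
    have hexp : exp (t * (B - 1)) = exp (-t) * exp (t * B) := by rw [← exp_add]; ring_nf
    have hinv : exp (-(t * B)) * exp (t * B) = 1 := by rw [← exp_add, neg_add_cancel, exp_zero]
    linear_combination (-exp (-(t * B))) * h + A * exp (-(t * B)) * hexp
      + (1 - A + A * exp (-t)) * hinv
  rw [one_sub_exp_neg_eq, one_sub_exp_neg_eq] at hscaled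
  refine mul_left_cancel₀ ht ?_
  linear_combination hscaled

noncomputable def tiltQuotient (α β m x t : ℝ) : ℝ :=
  (α + β * x) * expNegRemainder t -
    x * (α + (β - m) * x) ^ 2 * expNegRemainder (t * (α * x + β * x ^ 2 - m * x ^ 2))

lemma div_mul_tiltQuotient_eq {α β m x t : ℝ} (hx : x ≠ 0) (ht : t ≠ 0)
    (h : (α * x + β * x ^ 2) * exp (t * (-1 + α * x + β * x ^ 2 - m * x ^ 2)) +
      (1 - α * x - β * x ^ 2) * exp (t * (α * x + β * x ^ 2 - m * x ^ 2)) = 1) :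
    t / x * tiltQuotient α β m x t = m := by
  rw [show t * (-1 + α * x + β * x ^ 2 - m * x ^ 2) = t * (α * x + β * x ^ 2 - m * x ^ 2 - 1)
    by ring, show 1 - α * x - β * x ^ 2 = 1 - (α * x + β * x ^ 2) by ring] at h
  have hmgf := sub_eq_mul_of_mgf_eq_one ht h
  rw [tiltQuotient, div_mul_eq_mul_div, div_eq_iff hx]
  refine mul_right_cancel₀ hx ?_
  linear_combination -hmgf

lemma tendsto_tiltQuotient (α β m : ℝ) {θ : ℝ → ℝ} (hθ : ContinuousAt θ 0) (hθ0 : θ 0 = 0) :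
    Tendsto (fun x => tiltQuotient α β m x (θ x)) (𝓝 0) (𝓝 (α / 2)) := by
  have hψθ : ContinuousAt (fun x => expNegRemainder (θ x)) 0 :=
    continuousAt_expNegRemainder.comp_of_eq hθ hθ0
  have hψθB : ContinuousAt
      (fun x => expNegRemainder (θ x * (α * x + β * x ^ 2 - m * x ^ 2))) 0 :=
    continuousAt_expNegRemainder.comp_of_eq (hθ.mul (by fun_prop)) (by simp [hθ0])
  have hcont : ContinuousAt (fun x => tiltQuotient α β m x (θ x)) 0 := by
    unfold tiltQuotient
    fun_prop
  simpa [tiltQuotient, hθ0, expNegRemainder_zero, div_eq_mul_inv] using hcont.tendsto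

theorem tilting_parameter_first_order_general
    (α β m : ℝ) (hα : 0 < α) :
    (let f : ℝ → ℝ → ℝ := fun x θ =>
      (α * x + β * x ^ 2) * Real.exp (θ * (-1 + α * x + β * x ^ 2 - m * x ^ 2)) +
        (1 - α * x - β * x ^ 2) * Real.exp (θ * (α * x + β * x ^ 2 - m * x ^ 2));
    f 0 0 = 1 ∧
    ∀ θ : ℝ → ℝ, DifferentiableAt ℝ θ 0 → θ 0 = 0 →
      (∀ᶠ x in nhds (0:ℝ), f x (θ x) = 1) →
      deriv θ 0 ≠ 0 → deriv θ 0 = 2 * m / α) := by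
  intro f
  refine ⟨by simp [f], fun θ hθ hθ0 hf ha => ?_⟩
  have hderiv := hθ.hasDerivAt
  have hslope : Tendsto (fun x => θ x / x) (𝓝[≠] 0) (𝓝 (deriv θ 0)) := by
    simpa [hθ0, div_eq_inv_mul] using hasDerivAt_iff_tendsto_slope_zero.mp hderiv
  have hquot := tendsto_tiltQuotient α β m hθ.continuousAt hθ0
  have hm : deriv θ 0 * (α / 2) = m := by
    refine tendsto_nhds_unique (hslope.mul (hquot.mono_left nhdsWithin_le_nhds)) (tendsto_const_nhds.congr' ?_)
    filter_upwards [hf.filter_mono nhdsWithin_le_nhds, hderiv.eventually_ne (c := 0) ha,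
      self_mem_nhdsWithin] with x hfx hθx hx
    exact (div_mul_tiltQuotient_eq hx hθx hfx).symm
  rw [← hm]
  field_simp

theorem tilting_parameter_first_order
    (α β m : ℝ) (hα : 0 < α) (hβ : 0 < β) (hm : 0 < m) (hmβ : m < β) :
    (let f : ℝ → ℝ → ℝ := fun x θ =>
      (α * x + β * x ^ 2) * Real.exp (θ * (-1 + α * x + β * x ^ 2 - m * x ^ 2)) +
        (1 - α * x - β * x ^ 2) * Real.exp (θ * (α * x + β * x ^ 2 - m * x ^ 2));
    f 0 0 = 1 ∧
    ∀ θ : ℝ → ℝ, DifferentiableAt ℝ θ 0 → θ 0 = 0 →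
      (∀ᶠ x in nhds (0:ℝ), f x (θ x) = 1) →
      deriv θ 0 ≠ 0 → deriv θ 0 = 2 * m / α) :=
  tilting_parameter_first_order_general α β m hα
end

section
/- Let Y_i^{(1)} and Y_i^{(2)} (i ≤ N) be independent random variables where the Y_i^{(1)} are i.i.d. and the Y_i^{(2)} are i.i.d., each family independent of the other, with P(Y_i^{(j)} ≥ a_N^{(j)}) = 1/N for scaling sequences a_N^{(j)} → ∞, with max_{i≤N} Y_i^{(j)}/a_N^{(j)} → 1 in probability, and with lim_{t→∞} (−log P(Y^{(j)} ≥ u t))/(−log P(Y^{(j)} ≥ t)) = h^{(j)}(u) for all u ∈ [0,1]. Then for any u^{(1)}, u^{(2)} ∈ [0,1] with h^{(1)}(u^{(1)}) + h^{(2)}(u^{(2)}) < 1, the probability that there exists i ≤ N with Y_i^{(1)} ≥ u^{(1)} a_N^{(1)} and Y_i^{(2)} ≥ u^{(2)} a_N^{(2)} tends to 1 as N → ∞; hence liminf_N max_{i≤N} (Y_i^{(1)}/a_N^{(1)} + Y_i^{(2)}/a_N^{(2)}) ≥ u^{(1)} + u^{(2)} in probability. -/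
open MeasureTheory ProbabilityTheory Filter Set

/-!
Fix the thresholds `c_j = u_j a_N^{(j)}` and put `p_j = P(Y^{(j)} ≥ c_j)`. By independence the
events `{Y_i^{(1)} ≥ c_1, Y_i^{(2)} ≥ c_2}`, `i < N`, are i.i.d. with probability `p_1 p_2`, so none
of them occurs with probability `(1 - p_1 p_2)^N ≤ exp (-N p_1 p_2)`. Evaluating the tail-exponent
limit along `t = a_N^{(j)}`, where `-log P(Y^{(j)} ≥ t) = log N`, gives
`N p_1 p_2 = N^{1 - h^{(1)}(u_1) - h^{(2)}(u_2) + o(1)} → ∞`. On the event that some `i` exceeds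
both thresholds, the maximum of the normalized sums is at least `u_1 + u_2`.
-/

open Real in
lemma tendsto_natCast_mul_atTop_of_tendsto_neg_log_div_log {r : ℕ → ℝ} {c : ℝ} (hc : c < 1)
    (hr : ∀ᶠ N in atTop, 0 < r N)
    (hlim : Tendsto (fun N : ℕ => -log (r N) / log N) atTop (nhds c)) :
    Tendsto (fun N : ℕ => N * r N) atTop atTop := by
  have hlog : Tendsto (fun N : ℕ => log N) atTop atTop :=
    tendsto_log_atTop.comp tendsto_natCast_atTop_atTop
  have hexponent : Tendsto (fun N : ℕ => (1 - -log (r N) / log N) * log N) atTop atTop :=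
    (tendsto_const_nhds.sub hlim).pos_mul_atTop (sub_pos.2 hc) hlog
  refine (tendsto_exp_atTop.comp hexponent).congr' ?_
  filter_upwards [hr, eventually_gt_atTop 1] with N hrN hN
  have hlogN : log N ≠ 0 := (log_pos (by exact_mod_cast hN)).ne'
  rw [Function.comp_apply, sub_mul, one_mul, div_mul_cancel₀ _ hlogN, sub_neg_eq_add, exp_add,
    exp_log (by positivity), exp_log hrN]

lemma ENNReal.tendsto_one_sub_pow_of_tendsto_mul_toReal {q : ℕ → ENNReal} (hq : ∀ N, q N ≤ 1)
    (h : Tendsto (fun N : ℕ => N * (q N).toReal) atTop atTop) :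
    Tendsto (fun N => (1 - q N) ^ N) atTop (nhds 0) := by
  rw [← ENNReal.tendsto_toReal_iff
    (fun N => ENNReal.pow_ne_top (ENNReal.sub_ne_top ENNReal.one_ne_top)) ENNReal.zero_ne_top]
  refine squeeze_zero (fun _ => ENNReal.toReal_nonneg) (fun N => ?_)
    (Real.tendsto_exp_atBot.comp (tendsto_neg_atTop_atBot.comp h))
  have hqN : (q N).toReal ≤ 1 := ENNReal.toReal_le_of_le_ofReal zero_le_one (by simpa using hq N)
  calc ((1 - q N) ^ N).toReal = (1 - (q N).toReal) ^ N := by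
        rw [ENNReal.toReal_pow, ENNReal.toReal_sub_of_le (hq N) ENNReal.one_ne_top,
          ENNReal.toReal_one]
    _ ≤ Real.exp (-(q N).toReal) ^ N :=
        pow_le_pow_left₀ (sub_nonneg.2 hqN) (Real.one_sub_le_exp_neg _) N
    _ = Real.exp (-(N * (q N).toReal)) := by rw [← Real.exp_nat_mul, mul_neg]

section Independence

variable {Ω ι κ β : Type*} [MeasurableSpace Ω] [MeasurableSpace β] {μ : Measure Ω}

lemma iIndepSet.measure_biInter_compl {E : ι → Set Ω} (h : iIndepSet E μ)
    (hE : ∀ i, MeasurableSet (E i)) (s : Finset ι) :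
    μ (⋂ i ∈ s, (E i)ᶜ) = ∏ i ∈ s, (1 - μ (E i)) := by
  have := h.isProbabilityMeasure
  rw [iIndep.meas_biInter h fun i _ =>
    (MeasurableSpace.measurableSet_generateFrom (Set.mem_singleton _)).compl]
  exact Finset.prod_congr rfl fun i _ => prob_compl_eq_one_sub (hE i)

variable [Fintype κ]

lemma measure_iInter_preimage_of_iIndepFun {Y : κ → ι → Ω → β}
    (hindep : iIndepFun (fun p : κ × ι => Y p.1 p.2) μ) {S : κ → Set β}
    (hS : ∀ j, MeasurableSet (S j)) (i : ι) :
    μ (⋂ j, Y j i ⁻¹' S j) = ∏ j, μ (Y j i ⁻¹' S j) :=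
  (hindep.precomp (Prod.mk_left_injective i)).meas_iInter fun j => ⟨S j, hS j, rfl⟩

lemma iIndepSet_iInter_preimage_of_iIndepFun {Y : κ → ι → Ω → β} (hmeas : ∀ j i, Measurable (Y j i))
    (hindep : iIndepFun (fun p : κ × ι => Y p.1 p.2) μ) {S : κ → Set β}
    (hS : ∀ j, MeasurableSet (S j)) :
    iIndepSet (fun i => ⋂ j, Y j i ⁻¹' S j) μ := by
  rw [iIndepSet_iff_meas_biInter fun i => .iInter fun j => hmeas j i (hS j)]
  intro s
  calc μ (⋂ i ∈ s, ⋂ j, Y j i ⁻¹' S j)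
      = μ (⋂ p ∈ Finset.univ ×ˢ s, Y p.1 p.2 ⁻¹' S p.1) := by
        congr 1; ext; simp [Set.mem_iInter, forall_comm (α := κ)]
    _ = ∏ p ∈ Finset.univ ×ˢ s, μ (Y p.1 p.2 ⁻¹' S p.1) :=
        hindep.meas_biInter fun p _ => ⟨S p.1, hS p.1, rfl⟩
    _ = ∏ i ∈ s, μ (⋂ j, Y j i ⁻¹' S j) := by
        rw [Finset.prod_product_right]
        simp only [measure_iInter_preimage_of_iIndepFun hindep hS]

lemma measure_exists_forall_mem_of_iIndepFun [IsProbabilityMeasure μ] {Y : κ → ℕ → Ω → β}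
    (hmeas : ∀ j i, Measurable (Y j i)) (hindep : iIndepFun (fun p : κ × ℕ => Y p.1 p.2) μ)
    (hident : ∀ j i, IdentDistrib (Y j i) (Y j 0) μ μ) {S : κ → Set β}
    (hS : ∀ j, MeasurableSet (S j)) (N : ℕ) :
    μ {ω | ∃ i : Fin N, ∀ j, Y j i ω ∈ S j} = 1 - (1 - ∏ j, μ (Y j 0 ⁻¹' S j)) ^ N := by
  have hE : ∀ i, MeasurableSet (⋂ j, Y j i ⁻¹' S j) := fun i => .iInter fun j => hmeas j i (hS j)
  have hset : {ω | ∃ i : Fin N, ∀ j, Y j i ω ∈ S j}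
      = (⋂ i ∈ Finset.range N, (⋂ j, Y j i ⁻¹' S j)ᶜ)ᶜ := by
    ext; simp [Fin.exists_iff]
  rw [hset, prob_compl_eq_one_sub (Finset.measurableSet_biInter _ fun i _ => (hE i).compl),
    iIndepSet.measure_biInter_compl
      (iIndepSet_iInter_preimage_of_iIndepFun hmeas hindep hS) hE]
  simp [measure_iInter_preimage_of_iIndepFun hindep hS,
    fun j i => (hident j i).measure_mem_eq (hS j)]

end Independence

section Quantiles

variable {Ω : Type*} [MeasurableSpace Ω] {μ : Measure Ω} {X : Ω → ℝ} {a : ℕ → ℝ}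

lemma eventually_toReal_measure_pos_of_quantile [IsFiniteMeasure μ] (ha : Tendsto a atTop atTop)
    (hq : ∀ N : ℕ, 1 ≤ N → μ {ω | a N ≤ X ω} = (N : ENNReal)⁻¹) {u : ℝ} (hu : u ≤ 1) :
    ∀ᶠ N : ℕ in atTop, 0 < (μ {ω | u * a N ≤ X ω}).toReal := by
  filter_upwards [ha.eventually_ge_atTop 0, eventually_ge_atTop 1] with N haN hN
  refine ENNReal.toReal_pos (fun h0 => ?_) (measure_ne_top μ _)
  have hsub : {ω | a N ≤ X ω} ⊆ {ω | u * a N ≤ X ω} := fun ω hω =>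
    (mul_le_of_le_one_left haN hu).trans hω
  simpa [hq N hN] using measure_mono_null hsub h0

open Real in
lemma tendsto_neg_log_measure_div_log_of_quantile (ha : Tendsto a atTop atTop)
    (hq : ∀ N : ℕ, 1 ≤ N → μ {ω | a N ≤ X ω} = (N : ENNReal)⁻¹) {u c : ℝ}
    (htail : Tendsto (fun t : ℝ => (-log (μ {ω | u * t ≤ X ω}).toReal) /
      (-log (μ {ω | t ≤ X ω}).toReal)) atTop (nhds c)) :
    Tendsto (fun N : ℕ => -log (μ {ω | u * a N ≤ X ω}).toReal / log N) atTop (nhds c) := by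
  refine (htail.comp ha).congr' ?_
  filter_upwards [eventually_ge_atTop 1] with N hN
  simp only [Function.comp_apply, hq N hN, ENNReal.toReal_inv, ENNReal.toReal_natCast, log_inv,
    neg_neg]

end Quantiles

open Real in
theorem tendsto_measure_exists_forall_le_of_sum_lt_one {Ω κ : Type*} [MeasurableSpace Ω]
    {μ : Measure Ω} [IsProbabilityMeasure μ] [Fintype κ] {Y : κ → ℕ → Ω → ℝ}
    (hmeas : ∀ j i, Measurable (Y j i)) (hindep : iIndepFun (fun p : κ × ℕ => Y p.1 p.2) μ)
    (hident : ∀ j i, IdentDistrib (Y j i) (Y j 0) μ μ) {a : κ → ℕ → ℝ}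
    (ha_top : ∀ j, Tendsto (a j) atTop atTop)
    (ha_quantile : ∀ j, ∀ N : ℕ, 1 ≤ N → μ {ω | a j N ≤ Y j 0 ω} = (N : ENNReal)⁻¹)
    {u θ : κ → ℝ} (hu : ∀ j, u j ≤ 1)
    (htail : ∀ j, Tendsto (fun t : ℝ => (-log (μ {ω | u j * t ≤ Y j 0 ω}).toReal) /
      (-log (μ {ω | t ≤ Y j 0 ω}).toReal)) atTop (nhds (θ j)))
    (hθ : ∑ j, θ j < 1) :
    Tendsto (fun N : ℕ => μ {ω | ∃ i : Fin N, ∀ j, u j * a j N ≤ Y j i ω}) atTop (nhds 1) := by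
  set p : κ → ℕ → ℝ := fun j N => (μ {ω | u j * a j N ≤ Y j 0 ω}).toReal
  have hpos : ∀ᶠ N in atTop, ∀ j, 0 < p j N := eventually_all.2 fun j =>
    eventually_toReal_measure_pos_of_quantile (ha_top j) (ha_quantile j) (hu j)
  have hexponent : Tendsto (fun N : ℕ => -log (∏ j, p j N) / log N) atTop (nhds (∑ j, θ j)) := by
    refine (tendsto_finsetSum _ fun j _ => tendsto_neg_log_measure_div_log_of_quantile
      (ha_top j) (ha_quantile j) (htail j)).congr' ?_
    filter_upwards [hpos] with N hN
    rw [log_prod fun j _ => (hN j).ne', ← Finset.sum_neg_distrib, Finset.sum_div]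
  have hmany : Tendsto (fun N : ℕ => N * ∏ j, p j N) atTop atTop :=
    tendsto_natCast_mul_atTop_of_tendsto_neg_log_div_log hθ
      (hpos.mono fun N hN => Finset.prod_pos fun j _ => hN j) hexponent
  have hnone := ENNReal.tendsto_one_sub_pow_of_tendsto_mul_toReal
    (fun N => Finset.prod_le_one' fun j _ => prob_le_one (μ := μ))
    (by simpa [p, ENNReal.toReal_prod] using hmany)
  have hhit : Tendsto (fun N : ℕ => 1 - (1 - ∏ j, μ {ω | u j * a j N ≤ Y j 0 ω}) ^ N) atTop
      (nhds 1) := by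
    simpa using ENNReal.Tendsto.sub tendsto_const_nhds hnone (Or.inl ENNReal.one_ne_top)
  refine hhit.congr fun N => ?_
  exact (measure_exists_forall_mem_of_iIndepFun hmeas hindep hident
    (S := fun j => Ici (u j * a j N)) (fun j => measurableSet_Ici) N).symm

lemma add_le_ciSup_div_add_div {ι : Type*} [Finite ι] {x y : ι → ℝ} {b c u v : ℝ} (hb : 0 < b)
    (hc : 0 < c) {i : ι} (hx : u * b ≤ x i) (hy : v * c ≤ y i) :
    u + v ≤ ⨆ k, (x k / b + y k / c) :=
  (add_le_add ((le_div_iff₀ hb).2 hx) ((le_div_iff₀ hc).2 hy)).trans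
    (le_ciSup (f := fun k => x k / b + y k / c) (Set.finite_range _).bddAbove i)

theorem extreme_values_of_sums_lower_bound_general
    {Ω : Type*} [MeasurableSpace Ω] (μ : Measure Ω) [IsProbabilityMeasure μ]
    (Y : Fin 2 → ℕ → Ω → ℝ)
    (hmeas : ∀ j i, Measurable (Y j i))
    (hindep : iIndepFun (fun p : Fin 2 × ℕ => Y p.1 p.2) μ)
    (hident : ∀ j i, IdentDistrib (Y j i) (Y j 0) μ μ)
    (a : Fin 2 → ℕ → ℝ)
    (ha_top : ∀ j, Tendsto (a j) atTop atTop)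
    (ha_quantile : ∀ j, ∀ N : ℕ, 1 ≤ N →
      μ {ω | a j N ≤ Y j 0 ω} = (N : ENNReal)⁻¹)
    (h : Fin 2 → ℝ → ℝ)
    (htail : ∀ j, ∀ u ∈ Icc (0:ℝ) 1,
      Tendsto (fun t : ℝ =>
        (-Real.log (μ {ω | u * t ≤ Y j 0 ω}).toReal) /
          (-Real.log (μ {ω | t ≤ Y j 0 ω}).toReal)) atTop (nhds (h j u))) :
    ∀ u₁ ∈ Icc (0:ℝ) 1, ∀ u₂ ∈ Icc (0:ℝ) 1, h 0 u₁ + h 1 u₂ < 1 →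
      (Tendsto (fun N : ℕ =>
          μ {ω | ∃ i : Fin N, u₁ * a 0 N ≤ Y 0 i ω ∧ u₂ * a 1 N ≤ Y 1 i ω})
        atTop (nhds 1)) ∧
      (∀ ε : ℝ, 0 < ε →
        Tendsto (fun N : ℕ =>
          μ {ω | (⨆ i : Fin N, (Y 0 i ω / a 0 N + Y 1 i ω / a 1 N)) < u₁ + u₂ - ε})
          atTop (nhds 0)) := by
  intro u₁ hu₁ u₂ hu₂ hsum
  have hu : ∀ j, ![u₁, u₂] j ∈ Icc (0:ℝ) 1 := fun j => by fin_cases j <;> assumption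
  have hhit : Tendsto (fun N : ℕ =>
      μ {ω | ∃ i : Fin N, u₁ * a 0 N ≤ Y 0 i ω ∧ u₂ * a 1 N ≤ Y 1 i ω}) atTop (nhds 1) := by
    simpa [Fin.forall_fin_two] using tendsto_measure_exists_forall_le_of_sum_lt_one hmeas
      hindep hident ha_top ha_quantile (fun j => (hu j).2) (fun j => htail j _ (hu j))
      (by simpa using hsum)
  refine ⟨hhit, fun ε hε => ?_⟩
  have hmiss : Tendsto (fun N : ℕ =>
      μ {ω | ∃ i : Fin N, u₁ * a 0 N ≤ Y 0 i ω ∧ u₂ * a 1 N ≤ Y 1 i ω}ᶜ) atTop (nhds 0) := by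
    have hA : ∀ N : ℕ, MeasurableSet
        {ω | ∃ i : Fin N, u₁ * a 0 N ≤ Y 0 i ω ∧ u₂ * a 1 N ≤ Y 1 i ω} := fun N => by
      measurability
    simpa [prob_compl_eq_one_sub (hA _)] using
      ENNReal.Tendsto.sub tendsto_const_nhds hhit (Or.inl ENNReal.one_ne_top)
  refine tendsto_of_tendsto_of_tendsto_of_le_of_le' tendsto_const_nhds hmiss
    (Eventually.of_forall fun N => zero_le) ?_
  filter_upwards [(ha_top 0).eventually_gt_atTop 0, (ha_top 1).eventually_gt_atTop 0]
    with N ha₀ ha₁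
  refine measure_mono fun ω hω ⟨i, h₀, h₁⟩ => ?_
  linarith [(add_le_ciSup_div_add_div (x := fun k : Fin N => Y 0 k ω)
    (y := fun k : Fin N => Y 1 k ω) ha₀ ha₁ h₀ h₁).trans_lt hω]

theorem extreme_values_of_sums_lower_bound
    {Ω : Type*} [MeasurableSpace Ω] (μ : Measure Ω) [IsProbabilityMeasure μ]
    (Y : Fin 2 → ℕ → Ω → ℝ)
    (hmeas : ∀ j i, Measurable (Y j i))
    (hindep : iIndepFun (fun p : Fin 2 × ℕ => Y p.1 p.2) μ)
    (hident : ∀ j i, IdentDistrib (Y j i) (Y j 0) μ μ)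
    (a : Fin 2 → ℕ → ℝ)
    (ha_top : ∀ j, Tendsto (a j) atTop atTop)
    (ha_quantile : ∀ j, ∀ N : ℕ, 1 ≤ N →
      μ {ω | a j N ≤ Y j 0 ω} = (N : ENNReal)⁻¹)
    (hstable : ∀ j, ∀ ε : ℝ, 0 < ε →
      Tendsto (fun N : ℕ =>
        μ {ω | ε < |(⨆ i : Fin N, Y j i ω) / a j N - 1|}) atTop (nhds 0))
    (h : Fin 2 → ℝ → ℝ)
    (htail : ∀ j, ∀ u ∈ Icc (0:ℝ) 1,
      Tendsto (fun t : ℝ =>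
        (-Real.log (μ {ω | u * t ≤ Y j 0 ω}).toReal) /
          (-Real.log (μ {ω | t ≤ Y j 0 ω}).toReal)) atTop (nhds (h j u))) :
    ∀ u₁ ∈ Icc (0:ℝ) 1, ∀ u₂ ∈ Icc (0:ℝ) 1, h 0 u₁ + h 1 u₂ < 1 →
      (Tendsto (fun N : ℕ =>
          μ {ω | ∃ i : Fin N, u₁ * a 0 N ≤ Y 0 i ω ∧ u₂ * a 1 N ≤ Y 1 i ω})
        atTop (nhds 1)) ∧
      (∀ ε : ℝ, 0 < ε →
        Tendsto (fun N : ℕ =>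
          μ {ω | (⨆ i : Fin N, (Y 0 i ω / a 0 N + Y 1 i ω / a 1 N)) < u₁ + u₂ - ε})
          atTop (nhds 0)) :=
  extreme_values_of_sums_lower_bound_general μ Y hmeas hindep hident a ha_top ha_quantile h htail
end
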